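/- arXiv:0903.1789 — 2 statements merged into one kernel-verified Lean document; each statement's English description precedes it below -/
import Mathlib

section
/- Let D be a type with binary relations r2up and r3, and let r2down be the converse of r2up. Suppose that whenever r3 D1 D2 holds there exists D3 with (Relation.ReflTransGen r2up) D1 D3 and L D2 D3, where L (the 'lollipop' relation) satisfies: (a) if L a b and Relation.ReflTransGen r2up a c, then there exists d with Relation.ReflTransGen r2up b d and L c d (lollipops commute past up-type-2 sequences); and (b) if L a b then Relation.ReflTransGen r2down b a. Then any two elements joined by a chain of r2up, r2down and r3 steps with all r3 steps occurring in the middle are joined by a chain of r2up steps followed by r2down steps followed by a single lollipop-removal; in particular if D2 is reachable from D1 by a sorted sequence (r2up* then r3* then r2down*), and D0 is reachable from D1 by a single r3 step backwards, then D0 reaches D2 by a sorted sequence as well. -/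
/-! Each `r3` step `D1 → D2` can be traded for `r2up` steps from `D1` to some `D3` together with a
lollipop `D2 ⇝ D3`. Since lollipops commute past `r2up` sequences, the lollipops produced by a chain
of `r3` steps can all be pushed to the end, leaving `r2up` steps followed by lollipops; the
lollipops are then removed by `r2down` steps. -/

namespace Relation.ReflTransGen

variable {α : Type*} {r s t L : α → α → Prop}

theorem exists_commute_of_commute
    (hL : ∀ a b c, L a b → ReflTransGen r a c → ∃ d, ReflTransGen r b d ∧ L c d)
    {a b c : α} (hab : ReflTransGen L a b) (hac : ReflTransGen r a c) :
    ∃ d, ReflTransGen r b d ∧ ReflTransGen L c d := by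
  induction hab with
  | refl => exact ⟨c, hac, .refl⟩
  | tail _ hmb ih =>
    obtain ⟨d, hmd, hcd⟩ := ih
    obtain ⟨e, hbe, hde⟩ := hL _ _ _ hmb hmd
    exact ⟨e, hbe, hcd.tail hde⟩

theorem exists_reflTransGen_lollipop
    (ht : ∀ a b, t a b → ∃ c, ReflTransGen r a c ∧ L b c)
    (hL : ∀ a b c, L a b → ReflTransGen r a c → ∃ d, ReflTransGen r b d ∧ L c d)
    {a b : α} (hab : ReflTransGen t a b) :
    ∃ c, ReflTransGen r a c ∧ ReflTransGen L b c := by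
  induction hab with
  | refl => exact ⟨a, .refl, .refl⟩
  | tail _ hmb ih =>
    obtain ⟨c, hac, hmc⟩ := ih
    obtain ⟨e, hme, hbe⟩ := ht _ _ hmb
    obtain ⟨d, hcd, hed⟩ := exists_commute_of_commute hL hmc hme
    exact ⟨d, hac.trans hcd, hed.head hbe⟩

theorem exists_reflTransGen_reflTransGen
    (ht : ∀ a b, t a b → ∃ c, ReflTransGen r a c ∧ L b c)
    (hL : ∀ a b c, L a b → ReflTransGen r a c → ∃ d, ReflTransGen r b d ∧ L c d)
    (hrem : ∀ a b, L a b → ReflTransGen s b a)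
    {a b : α} (hab : ReflTransGen t a b) :
    ∃ c, ReflTransGen r a c ∧ ReflTransGen s c b := by
  obtain ⟨c, hac, hbc⟩ := hab.exists_reflTransGen_lollipop ht hL
  exact ⟨c, hac, (hbc.lift' id fun x y hxy => (hrem x y hxy).swap).swap⟩

end Relation.ReflTransGen

theorem stmt1_general {D : Type*} (r2up r2down r3 L : D → D → Prop)
    (h3 : ∀ D1 D2, r3 D1 D2 → ∃ D3, Relation.ReflTransGen r2up D1 D3 ∧ L D2 D3)
    (hLcomm : ∀ a b c, L a b → Relation.ReflTransGen r2up a c →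
      ∃ d, Relation.ReflTransGen r2up b d ∧ L c d)
    (hLrem : ∀ a b, L a b → Relation.ReflTransGen r2down b a)
    (D0 D1 D2 : D)
    (hsorted : ∃ z1 z2, Relation.ReflTransGen r2up D1 z1 ∧
      Relation.ReflTransGen r3 z1 z2 ∧ Relation.ReflTransGen r2down z2 D2)
    (hstep : r3 D0 D1) :
    ∃ z1 z2, Relation.ReflTransGen r2up D0 z1 ∧
      Relation.ReflTransGen r3 z1 z2 ∧ Relation.ReflTransGen r2down z2 D2 := by
  obtain ⟨z1, z2, hD1z1, hz1z2, hz2D2⟩ := hsorted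
  obtain ⟨c, hz1c, hcz2⟩ := hz1z2.exists_reflTransGen_reflTransGen h3 hLcomm hLrem
  obtain ⟨D3, hD0D3, hD1D3⟩ := h3 _ _ hstep
  obtain ⟨d, hD3d, hcd⟩ := hLcomm _ _ _ hD1D3 (hD1z1.trans hz1c)
  exact ⟨d, d, hD0D3.trans hD3d, .refl, (hLrem _ _ hcd).trans (hcz2.trans hz2D2)⟩

theorem stmt1 {D : Type*} (r2up r2down r3 L : D → D → Prop)
    (hdown : ∀ x y, r2down x y ↔ r2up y x)
    (h3 : ∀ D1 D2, r3 D1 D2 → ∃ D3, Relation.ReflTransGen r2up D1 D3 ∧ L D2 D3)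
    (hLcomm : ∀ a b c, L a b → Relation.ReflTransGen r2up a c →
      ∃ d, Relation.ReflTransGen r2up b d ∧ L c d)
    (hLrem : ∀ a b, L a b → Relation.ReflTransGen r2down b a)
    (D0 D1 D2 : D)
    (hsorted : ∃ z1 z2, Relation.ReflTransGen r2up D1 z1 ∧
      Relation.ReflTransGen r3 z1 z2 ∧ Relation.ReflTransGen r2down z2 D2)
    (hstep : r3 D0 D1) :
    ∃ z1 z2, Relation.ReflTransGen r2up D0 z1 ∧
      Relation.ReflTransGen r3 z1 z2 ∧ Relation.ReflTransGen r2down z2 D2 :=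
  stmt1_general r2up r2down r3 L h3 hLcomm hLrem D0 D1 D2 hsorted hstep
end

section
/- Let α be a type with a relation up, its converse down, and a relation mid. Suppose every pair x, y connected by the equivalence relation generated by up and mid (i.e., by the reflexive-transitive closure of the symmetric union) satisfies: there exists a sorted path x →up* z1 →mid* z2 →down* y. Further, let extraUp be another relation on α and f : α → ℤ an invariant constant on up, down, mid steps, changed by ±1 by each extraUp step with both signs realizable from any point, and assume two elements with equal f-value are connected by up/mid/down chains. Then for any x, y in the same extraUp/up/mid/down equivalence class, there is a path from x to y consisting of extraUp-steps, then up-steps, then mid-steps, then down-steps. -/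
/-!
Since every point has `extraUp`-successors raising and lowering `f` by one, finitely many
`extraUp` steps lead from `x` to some `a` with `f a = f y`. By Trace's theorem `a` and `y` are
joined by a chain of `up`, `mid` and `down` moves, which the sorting hypothesis rearranges into
`up`, then `mid`, then `down` moves.
-/

theorem Relation.exists_reflTransGen_of_forall_exists_succ_pred {α : Type*} {r : α → α → Prop}
    {g : α → ℤ} (hsucc : ∀ x, ∃ y, r x y ∧ g y = g x + 1)
    (hpred : ∀ x, ∃ y, r x y ∧ g y = g x - 1) (x : α) (k : ℤ) :
    ∃ y, Relation.ReflTransGen r x y ∧ g y = g x + k := by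
  induction k using Int.induction_on with
  | zero => exact ⟨x, .refl, by simp⟩
  | succ k ih =>
    obtain ⟨y, hxy, hy⟩ := ih
    obtain ⟨z, hyz, hz⟩ := hsucc y
    exact ⟨z, hxy.tail hyz, by omega⟩
  | pred k ih =>
    obtain ⟨y, hxy, hy⟩ := ih
    obtain ⟨z, hyz, hz⟩ := hpred y
    exact ⟨z, hxy.tail hyz, by omega⟩

theorem stmt5_general {α : Type*} (extraUp up mid down : α → α → Prop)
    (hdown : ∀ x y, down x y ↔ up y x)
    (f : α → ℤ)
    (hrealize : ∀ x (ε : ℤ), ε = 1 ∨ ε = -1 → ∃ y, extraUp x y ∧ f y = f x + ε)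
    (hsorted : ∀ x y, Relation.ReflTransGen
        (fun a b => up a b ∨ mid a b ∨ up b a ∨ mid b a) x y →
      ∃ z1 z2, Relation.ReflTransGen up x z1 ∧ Relation.ReflTransGen mid z1 z2 ∧
        Relation.ReflTransGen down z2 y)
    (htrace : ∀ x y, f x = f y →
      Relation.ReflTransGen (fun a b => up a b ∨ mid a b ∨ down a b) x y)
    (x y : α) :
    ∃ a b c, Relation.ReflTransGen extraUp x a ∧ Relation.ReflTransGen up a b ∧
      Relation.ReflTransGen mid b c ∧ Relation.ReflTransGen down c y := by
  obtain ⟨a, hxa, hfa⟩ := Relation.exists_reflTransGen_of_forall_exists_succ_pred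
    (fun w => hrealize w 1 (.inl rfl)) (fun w => hrealize w (-1) (.inr rfl)) x (f y - f x)
  obtain ⟨b, c, hab, hbc, hcy⟩ := hsorted a y <| Relation.ReflTransGen.mono
    (fun p q => Or.imp_right (Or.imp_right fun hpq => Or.inl ((hdown p q).1 hpq)))
    a y (htrace a y (by omega))
  exact ⟨a, b, c, hxa, hab, hbc, hcy⟩

theorem stmt5 {α : Type*} (extraUp up mid down : α → α → Prop)
    (hdown : ∀ x y, down x y ↔ up y x)
    (f : α → ℤ)
    (hfu : ∀ x y, up x y → f x = f y)
    (hfm : ∀ x y, mid x y → f x = f y)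
    (hfd : ∀ x y, down x y → f x = f y)
    (hfe : ∀ x y, extraUp x y → f y = f x + 1 ∨ f y = f x - 1)
    (hrealize : ∀ x (ε : ℤ), ε = 1 ∨ ε = -1 → ∃ y, extraUp x y ∧ f y = f x + ε)
    (hsorted : ∀ x y, Relation.ReflTransGen
        (fun a b => up a b ∨ mid a b ∨ up b a ∨ mid b a) x y →
      ∃ z1 z2, Relation.ReflTransGen up x z1 ∧ Relation.ReflTransGen mid z1 z2 ∧
        Relation.ReflTransGen down z2 y)
    (htrace : ∀ x y, f x = f y →
      Relation.ReflTransGen (fun a b => up a b ∨ mid a b ∨ down a b) x y)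
    (x y : α)
    (h : Relation.EqvGen
      (fun a b => extraUp a b ∨ up a b ∨ mid a b ∨ down a b) x y) :
    ∃ a b c, Relation.ReflTransGen extraUp x a ∧ Relation.ReflTransGen up a b ∧
      Relation.ReflTransGen mid b c ∧ Relation.ReflTransGen down c y :=
  stmt5_general extraUp up mid down hdown f hrealize hsorted htrace x y
end
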